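/- Let C ≥ 1, λ > 0, Λ > 0, let p : (0,1]×ℝ^d×ℝ^d → [0,∞) be measurable with p(t,x,y) ≤ C·(Γ_λ(t; x−y) + η(t; x−y)) for all t ∈ (0,1] and x,y ∈ ℝ^d, let μ be a nonnegative Borel measure on ℝ^d, let G : ℝ^d×ℝ^d → [0,∞) be bounded measurable, and let c : ℝ^d×ℝ^d → [0,Λ] be measurable. Define q⁽⁰⁾ := p and, for k ≥ 1, q⁽ᵏ⁾(t,x,y) := ∫₀^t ∫_{ℝ^d} p(t−s,x,z)·q⁽ᵏ⁻¹⁾(s,z,y) μ(dz) ds + ∫₀^t ∫_{ℝ^d×ℝ^d} p(t−s,x,z)·q⁽ᵏ⁻¹⁾(s,w,y)·c(z,w)·G(z,w)/|z−w|^{d+α} dz dw ds. Then there exist constants C₀ ≥ 1 and M ≥ 1, depending only on d, α, C, λ, Λ, such that for every k ≥ 0 and every (t,x) ∈ (0,1]×ℝ^d, ∫_{ℝ^d} q⁽ᵏ⁾(t,x,y) dy ≤ C₀·( M·(N_μ^{α,λ}(t) + N_G^{α,λ}(t)) )^k. -/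

import Mathlib

open MeasureTheory Set ENNReal

noncomputable def Gam (d : ℕ) (lam t : ℝ) (x : EuclideanSpace ℝ (Fin d)) : ℝ :=
  t ^ (-(d : ℝ) / 2) * Real.exp (-lam * ‖x‖ ^ 2 / t)

noncomputable def eta (d : ℕ) (α t : ℝ) (x : EuclideanSpace ℝ (Fin d)) : ℝ :=
  t / (t ^ ((1 : ℝ) / 2) + ‖x‖) ^ ((d : ℝ) + α)

noncomputable def Nmu (d : ℕ) (α lam : ℝ) (μ : Measure (EuclideanSpace ℝ (Fin d)))
    (t : ℝ) : ℝ≥0∞ :=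
  ⨆ x : EuclideanSpace ℝ (Fin d), ∫⁻ s in Set.Ioc (0 : ℝ) t, ∫⁻ y,
    ENNReal.ofReal (Gam d lam s (x - y) + eta d α s (x - y)) ∂μ

noncomputable def NF (d : ℕ) (α lam : ℝ)
    (G : EuclideanSpace ℝ (Fin d) → EuclideanSpace ℝ (Fin d) → ℝ) (t : ℝ) : ℝ≥0∞ :=
  ⨆ y : EuclideanSpace ℝ (Fin d), ∫⁻ s in Set.Ioc (0 : ℝ) t,
    ∫⁻ zw : EuclideanSpace ℝ (Fin d) × EuclideanSpace ℝ (Fin d),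
      ENNReal.ofReal ((Gam d lam s (y - zw.1) + eta d α s (y - zw.1)) *
        (G zw.1 zw.2 + G zw.2 zw.1) / ‖zw.1 - zw.2‖ ^ ((d : ℝ) + α))

lemma measurable_rpow_const (c : ℝ) : Measurable fun x : ℝ => x ^ c :=
  measurable_of_continuousOn_compl_singleton 0 fun x hx =>
    (Real.continuousAt_rpow_const x c (Or.inl hx)).continuousWithinAt

lemma meas_gam (d : ℕ) (lam : ℝ) :
    Measurable (fun p : ℝ × EuclideanSpace ℝ (Fin d) => Gam d lam p.1 p.2) := by
  unfold Gam
  exact ((measurable_rpow_const _).comp measurable_fst).mul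
    (((measurable_const.mul ((measurable_snd.norm).pow_const 2)).div measurable_fst).exp)

lemma meas_eta (d : ℕ) (α : ℝ) :
    Measurable (fun p : ℝ × EuclideanSpace ℝ (Fin d) => eta d α p.1 p.2) := by
  unfold eta
  exact measurable_fst.div ((measurable_rpow_const _).comp
    (((measurable_rpow_const _).comp measurable_fst).add measurable_snd.norm))

lemma gam_pos (d : ℕ) {lam t : ℝ} (ht : 0 < t) (x : EuclideanSpace ℝ (Fin d)) :
    0 < Gam d lam t x := by
  unfold Gam; positivity

lemma eta_nonneg (d : ℕ) {α t : ℝ} (x : EuclideanSpace ℝ (Fin d)) (ht : 0 ≤ t) :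
    0 ≤ eta d α t x := by
  unfold eta; positivity

lemma lint_scale (d : ℕ) (f : EuclideanSpace ℝ (Fin d) → ℝ≥0∞) (hf : Measurable f)
    {r : ℝ} (hr : 0 < r) :
    ∫⁻ x, f x = ENNReal.ofReal (r ^ d) * ∫⁻ x, f (r • x) := by
  have hsm : Measurable fun x : EuclideanSpace ℝ (Fin d) => r • x :=
    measurable_id.const_smul r
  have h1 : ∫⁻ x, f (r • x) = ∫⁻ x, f x ∂(Measure.map (r • ·) volume) :=
    (lintegral_map hf hsm).symm
  rw [Measure.map_addHaar_smul volume hr.ne', lintegral_smul_measure,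
    finrank_euclideanSpace_fin] at h1
  rw [h1, smul_eq_mul, ← mul_assoc, ← ENNReal.ofReal_mul (by positivity), abs_of_pos (by positivity),
    mul_inv_cancel₀ (by positivity), ENNReal.ofReal_one, one_mul]

lemma Ig_lt_top (d : ℕ) {lam : ℝ} (hlam : 0 < lam) :
    (∫⁻ u : EuclideanSpace ℝ (Fin d), ENNReal.ofReal (Real.exp (-lam * ‖u‖ ^ 2))) < ⊤ := by
  have hint : Integrable (fun v : EuclideanSpace ℝ (Fin d) => Real.exp (-lam * ‖v‖ ^ 2)) := by
    have h := (GaussianFourier.integrable_cexp_neg_mul_sq_norm_add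
      (b := (lam : ℂ)) (by simpa using hlam) 0 (0 : EuclideanSpace ℝ (Fin d))).norm
    convert h using 2 with v
    rw [zero_mul, add_zero,
      show (-(lam : ℂ) * (‖v‖ : ℂ) ^ 2) = ((-lam * ‖v‖ ^ 2 : ℝ) : ℂ) by push_cast; ring,
      Complex.norm_exp_ofReal]
  calc ∫⁻ u : EuclideanSpace ℝ (Fin d), ENNReal.ofReal (Real.exp (-lam * ‖u‖ ^ 2))
      ≤ ∫⁻ u : EuclideanSpace ℝ (Fin d), ↑‖Real.exp (-lam * ‖u‖ ^ 2)‖₊ := by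
        refine lintegral_mono fun u => ?_
        rw [← ENNReal.ofReal_coe_nnreal, coe_nnnorm]
        exact ENNReal.ofReal_le_ofReal (le_abs_self _)
    _ < ⊤ := hint.2

lemma Ij_lt_top (d : ℕ) {α : ℝ} (hα : 0 < α) :
    (∫⁻ u : EuclideanSpace ℝ (Fin d),
      ENNReal.ofReal ((1 + ‖u‖) ^ (-((d : ℝ) + α)))) < ⊤ := by
  have hint : Integrable (fun u : EuclideanSpace ℝ (Fin d) => (1 + ‖u‖) ^ (-((d : ℝ) + α))) := by
    apply integrable_one_add_norm
    rw [finrank_euclideanSpace_fin]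
    linarith
  calc ∫⁻ u : EuclideanSpace ℝ (Fin d), ENNReal.ofReal ((1 + ‖u‖) ^ (-((d : ℝ) + α)))
      ≤ ∫⁻ u : EuclideanSpace ℝ (Fin d), ↑‖(1 + ‖u‖) ^ (-((d : ℝ) + α))‖₊ := by
        refine lintegral_mono fun u => ?_
        rw [← ENNReal.ofReal_coe_nnreal, coe_nnnorm]
        exact ENNReal.ofReal_le_ofReal (le_abs_self _)
    _ < ⊤ := hint.2

lemma gauss_part (d : ℕ) {lam t : ℝ} (hlam : 0 < lam) (ht : 0 < t) :
    ∫⁻ y : EuclideanSpace ℝ (Fin d), ENNReal.ofReal (Gam d lam t y) =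
      ∫⁻ u : EuclideanSpace ℝ (Fin d), ENNReal.ofReal (Real.exp (-lam * ‖u‖ ^ 2)) := by
  set r : ℝ := t ^ ((1 : ℝ) / 2) with hrdef
  have hr : 0 < r := Real.rpow_pos_of_pos ht _
  have hr2 : r ^ 2 = t := by
    rw [hrdef, ← Real.rpow_natCast (t ^ ((1:ℝ)/2)) 2, ← Real.rpow_mul ht.le]
    norm_num
  have hmeas : Measurable fun y : EuclideanSpace ℝ (Fin d) => ENNReal.ofReal (Gam d lam t y) :=
    ENNReal.measurable_ofReal.comp
      ((meas_gam d lam).comp (measurable_const.prodMk measurable_id))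
  rw [lint_scale d _ hmeas hr]
  have hpt : ∀ u : EuclideanSpace ℝ (Fin d), Gam d lam t (r • u) =
      t ^ (-(d : ℝ) / 2) * Real.exp (-lam * ‖u‖ ^ 2) := by
    intro u
    unfold Gam
    congr 1
    rw [norm_smul, Real.norm_eq_abs, abs_of_pos hr, mul_pow, hr2]
    congr 1
    field_simp
  simp_rw [hpt]
  have hsplit : ∀ u : EuclideanSpace ℝ (Fin d),
      ENNReal.ofReal (t ^ (-(d : ℝ) / 2) * Real.exp (-lam * ‖u‖ ^ 2)) =
      ENNReal.ofReal (t ^ (-(d : ℝ) / 2)) * ENNReal.ofReal (Real.exp (-lam * ‖u‖ ^ 2)) :=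
    fun u => ENNReal.ofReal_mul (by positivity)
  simp_rw [hsplit]
  rw [lintegral_const_mul' _ _ ENNReal.ofReal_ne_top, ← mul_assoc,
    ← ENNReal.ofReal_mul (by positivity)]
  have : r ^ d * t ^ (-(d : ℝ) / 2) = 1 := by
    rw [hrdef, ← Real.rpow_natCast (t ^ ((1:ℝ)/2)) d, ← Real.rpow_mul ht.le,
      ← Real.rpow_add ht, show 1 / 2 * (d : ℝ) + -(d : ℝ) / 2 = 0 by ring, Real.rpow_zero]
  rw [this, ENNReal.ofReal_one, one_mul]

lemma eta_part (d : ℕ) {α t : ℝ} (hα1 : 0 < α) (hα2 : α < 2) (ht : 0 < t) (ht1 : t ≤ 1) :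
    ∫⁻ y : EuclideanSpace ℝ (Fin d), ENNReal.ofReal (eta d α t y) ≤
      ∫⁻ u : EuclideanSpace ℝ (Fin d), ENNReal.ofReal ((1 + ‖u‖) ^ (-((d : ℝ) + α))) := by
  set r : ℝ := t ^ ((1 : ℝ) / 2) with hrdef
  have hr : 0 < r := Real.rpow_pos_of_pos ht _
  have hmeas : Measurable fun y : EuclideanSpace ℝ (Fin d) => ENNReal.ofReal (eta d α t y) :=
    ENNReal.measurable_ofReal.comp
      ((meas_eta d α).comp (measurable_const.prodMk measurable_id))
  rw [lint_scale d _ hmeas hr]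
  have hpt : ∀ u : EuclideanSpace ℝ (Fin d), eta d α t (r • u) =
      (t / r ^ ((d : ℝ) + α)) * (1 + ‖u‖) ^ (-((d : ℝ) + α)) := by
    intro u
    unfold eta
    rw [norm_smul, Real.norm_eq_abs, abs_of_pos hr, ← hrdef,
      show r + r * ‖u‖ = r * (1 + ‖u‖) by ring,
      Real.mul_rpow hr.le (by positivity), Real.rpow_neg (by positivity)]
    field_simp
  simp_rw [hpt]
  have hsplit : ∀ u : EuclideanSpace ℝ (Fin d),
      ENNReal.ofReal ((t / r ^ ((d : ℝ) + α)) * (1 + ‖u‖) ^ (-((d : ℝ) + α))) =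
      ENNReal.ofReal (t / r ^ ((d : ℝ) + α)) *
        ENNReal.ofReal ((1 + ‖u‖) ^ (-((d : ℝ) + α))) :=
    fun u => ENNReal.ofReal_mul (by positivity)
  simp_rw [hsplit]
  rw [lintegral_const_mul' _ _ ENNReal.ofReal_ne_top, ← mul_assoc,
    ← ENNReal.ofReal_mul (by positivity)]
  have hle1 : r ^ d * (t / r ^ ((d : ℝ) + α)) ≤ 1 := by
    have key : ∀ a b : ℝ, t ^ a * (t / t ^ b) = t ^ (a + 1 - b) := by
      intro a b
      rw [show a + 1 - b = a + 1 - b from rfl, Real.rpow_sub ht, Real.rpow_add ht,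
        Real.rpow_one]
      ring
    have : r ^ d * (t / r ^ ((d : ℝ) + α)) = t ^ (1 - α / 2) := by
      rw [hrdef, ← Real.rpow_natCast (t ^ ((1:ℝ)/2)) d, ← Real.rpow_mul ht.le,
        ← Real.rpow_mul ht.le, key]
      congr 1
      ring
    rw [this]
    exact Real.rpow_le_one ht.le ht1 (by linarith)
  calc ENNReal.ofReal (r ^ d * (t / r ^ ((d : ℝ) + α))) *
        ∫⁻ u : EuclideanSpace ℝ (Fin d), ENNReal.ofReal ((1 + ‖u‖) ^ (-((d : ℝ) + α)))
      ≤ 1 * ∫⁻ u : EuclideanSpace ℝ (Fin d), ENNReal.ofReal ((1 + ‖u‖) ^ (-((d : ℝ) + α))) := by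
        gcongr
        exact ENNReal.ofReal_le_one.mpr hle1
    _ = _ := one_mul _

noncomputable def Kc (d : ℕ) (α lam : ℝ) : ℝ≥0∞ :=
  (∫⁻ u : EuclideanSpace ℝ (Fin d), ENNReal.ofReal (Real.exp (-lam * ‖u‖ ^ 2))) +
    ∫⁻ u : EuclideanSpace ℝ (Fin d), ENNReal.ofReal ((1 + ‖u‖) ^ (-((d : ℝ) + α)))

lemma meas_ge_ofReal (d : ℕ) (α lam t : ℝ) (x : EuclideanSpace ℝ (Fin d)) :
    Measurable fun y : EuclideanSpace ℝ (Fin d) =>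
      ENNReal.ofReal (Gam d lam t (x - y) + eta d α t (x - y)) := by
  have h1 : Measurable fun y : EuclideanSpace ℝ (Fin d) => x - y :=
    measurable_const.sub measurable_id
  exact ENNReal.measurable_ofReal.comp
    ((((meas_gam d lam).comp (measurable_const.prodMk h1)).add
      ((meas_eta d α).comp (measurable_const.prodMk h1))))

lemma base_bound (d : ℕ) {α lam : ℝ} (hα1 : 0 < α) (hα2 : α < 2) (hlam : 0 < lam)
    {t : ℝ} (ht : 0 < t) (ht1 : t ≤ 1) (x : EuclideanSpace ℝ (Fin d)) :
    ∫⁻ y, ENNReal.ofReal (Gam d lam t (x - y) + eta d α t (x - y)) ≤ Kc d α lam := by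
  have hg : Measurable fun y : EuclideanSpace ℝ (Fin d) =>
      ENNReal.ofReal (Gam d lam t y + eta d α t y) := by
    exact ENNReal.measurable_ofReal.comp
      ((((meas_gam d lam).comp (measurable_const.prodMk measurable_id)).add
        ((meas_eta d α).comp (measurable_const.prodMk measurable_id))))
  rw [show (∫⁻ y, ENNReal.ofReal (Gam d lam t (x - y) + eta d α t (x - y))) =
      ∫⁻ y, ENNReal.ofReal (Gam d lam t y + eta d α t y) from
    (Measure.measurePreserving_sub_left volume x).lintegral_comp hg]
  have hsplit : ∀ y : EuclideanSpace ℝ (Fin d),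
      ENNReal.ofReal (Gam d lam t y + eta d α t y) =
      ENNReal.ofReal (Gam d lam t y) + ENNReal.ofReal (eta d α t y) := fun y =>
    ENNReal.ofReal_add (gam_pos d ht y).le (eta_nonneg d y ht.le)
  simp_rw [hsplit]
  have hm1 : Measurable fun y : EuclideanSpace ℝ (Fin d) => ENNReal.ofReal (Gam d lam t y) :=
    ENNReal.measurable_ofReal.comp ((meas_gam d lam).comp (measurable_const.prodMk measurable_id))
  rw [lintegral_add_left hm1]
  exact add_le_add (le_of_eq (gauss_part d hlam ht)) (eta_part d hα1 hα2 ht ht1)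

lemma Nmu_mono (d : ℕ) (α lam : ℝ) (μ : Measure (EuclideanSpace ℝ (Fin d)))
    {s t : ℝ} (h : s ≤ t) : Nmu d α lam μ s ≤ Nmu d α lam μ t :=
  iSup_mono fun x => lintegral_mono_set (Ioc_subset_Ioc_right h)

lemma NF_mono (d : ℕ) (α lam : ℝ) (G : EuclideanSpace ℝ (Fin d) → EuclideanSpace ℝ (Fin d) → ℝ)
    {s t : ℝ} (h : s ≤ t) : NF d α lam G s ≤ NF d α lam G t :=
  iSup_mono fun x => lintegral_mono_set (Ioc_subset_Ioc_right h)

lemma sigmaFinite_of_pos_lintegral (μ : Measure (EuclideanSpace ℝ (Fin d)))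
    (g : EuclideanSpace ℝ (Fin d) → ℝ≥0∞) (hmg : Measurable g) (hg : ∀ y, 0 < g y)
    (hfin : ∫⁻ y, g y ∂μ ≠ ⊤) : SigmaFinite μ := by
  refine ⟨⟨⟨fun n => {y | ((n + 1 : ℕ) : ℝ≥0∞)⁻¹ < g y}, fun _ => trivial, fun n => ?_, ?_⟩⟩⟩
  · have hmark : μ {y | ((n + 1 : ℕ) : ℝ≥0∞)⁻¹ ≤ g y} ≤
        (∫⁻ y, g y ∂μ) / ((n + 1 : ℕ) : ℝ≥0∞)⁻¹ :=
      meas_ge_le_lintegral_div hmg.aemeasurable (by simp) (by simp)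
    have hsub : {y | ((n + 1 : ℕ) : ℝ≥0∞)⁻¹ < g y} ⊆ {y | ((n + 1 : ℕ) : ℝ≥0∞)⁻¹ ≤ g y} :=
      fun y hy => le_of_lt (Set.mem_setOf_eq ▸ hy)
    exact lt_of_le_of_lt (le_trans (measure_mono hsub) hmark)
      (ENNReal.div_lt_top hfin (by simp))
  · ext y
    simp only [Set.mem_iUnion, Set.mem_setOf_eq, Set.mem_univ, iff_true]
    obtain ⟨n, hn⟩ := ENNReal.exists_inv_nat_lt (hg y).ne'
    exact ⟨n, lt_of_le_of_lt (by gcongr; exact Nat.le_succ n) hn⟩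

lemma Kc_lt_top (d : ℕ) {α lam : ℝ} (hα : 0 < α) (hlam : 0 < lam) : Kc d α lam < ⊤ :=
  ENNReal.add_lt_top.mpr ⟨Ig_lt_top d hlam, Ij_lt_top d hα⟩

section Duhamel

variable {d : ℕ} {α lam C : ℝ}

lemma time_reflect (t : ℝ) (F : ℝ → ℝ≥0∞) (hF : Measurable F) :
    ∫⁻ s in Set.Ioo (0 : ℝ) t, F (t - s) = ∫⁻ s in Set.Ioo (0 : ℝ) t, F s := by
  have h1 : MeasurePreserving (fun s : ℝ => t - s) volume volume :=
    Measure.measurePreserving_sub_left volume t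
  have hpre : (fun s : ℝ => t - s) ⁻¹' Set.Ioo 0 t = Set.Ioo 0 t := by
    ext s
    simp only [Set.mem_preimage, Set.mem_Ioo]
    constructor <;> rintro ⟨h1, h2⟩ <;> constructor <;> linarith
  have h2 := h1.restrict_preimage (s := Set.Ioo (0:ℝ) t) measurableSet_Ioo
  rw [hpre] at h2
  exact h2.lintegral_comp hF

lemma restrict_Ioc_Ioo (t : ℝ) :
    (volume : Measure ℝ).restrict (Set.Ioc (0:ℝ) t) = volume.restrict (Set.Ioo 0 t) :=
  (Measure.restrict_congr_set Ioo_ae_eq_Ioc).symm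

lemma duhamel_mu (hα1 : 0 < α) (hα2 : α < 2) (hlam : 0 < lam) (hC : 0 ≤ C)
    (p : ℝ → EuclideanSpace ℝ (Fin d) → EuclideanSpace ℝ (Fin d) → ℝ)
    (hpb : ∀ t ∈ Set.Ioc (0 : ℝ) 1, ∀ x y,
      p t x y ≤ C * (Gam d lam t (x - y) + eta d α t (x - y)))
    (μ : Measure (EuclideanSpace ℝ (Fin d))) [SigmaFinite μ]
    {t : ℝ} (ht : 0 < t) (ht1 : t ≤ 1) (x : EuclideanSpace ℝ (Fin d)) :
    ∫⁻ s in Set.Ioc (0 : ℝ) t, ∫⁻ z, ENNReal.ofReal (p (t - s) x z) ∂μ ≤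
      ENNReal.ofReal C * Nmu d α lam μ t := by
  set Fge : ℝ → ℝ≥0∞ := fun u => ∫⁻ z, ENNReal.ofReal (Gam d lam u (x - z) + eta d α u (x - z)) ∂μ
    with hFge
  have hgm : Measurable (fun q : ℝ × EuclideanSpace ℝ (Fin d) =>
      ENNReal.ofReal (Gam d lam q.1 (x - q.2) + eta d α q.1 (x - q.2))) :=
    ENNReal.measurable_ofReal.comp
      (((meas_gam d lam).comp (measurable_fst.prodMk (measurable_const.sub measurable_snd))).add
        ((meas_eta d α).comp (measurable_fst.prodMk (measurable_const.sub measurable_snd))))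
  have hFgeM : Measurable Fge := hgm.lintegral_prod_right'
  rw [restrict_Ioc_Ioo]
  calc ∫⁻ s in Set.Ioo (0 : ℝ) t, ∫⁻ z, ENNReal.ofReal (p (t - s) x z) ∂μ
      ≤ ∫⁻ s in Set.Ioo (0 : ℝ) t, ENNReal.ofReal C * Fge (t - s) := by
        refine setLIntegral_mono' measurableSet_Ioo fun s hs => ?_
        have hts : t - s ∈ Set.Ioc (0:ℝ) 1 := ⟨by simp [Set.mem_Ioo] at hs; linarith [hs.2],
          by simp [Set.mem_Ioo] at hs; linarith [hs.1]⟩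
        rw [hFge, ← lintegral_const_mul' _ _ ENNReal.ofReal_ne_top]
        refine lintegral_mono fun z => ?_
        rw [← ENNReal.ofReal_mul hC]
        exact ENNReal.ofReal_le_ofReal (hpb _ hts x z)
    _ = ENNReal.ofReal C * ∫⁻ s in Set.Ioo (0 : ℝ) t, Fge (t - s) :=
        lintegral_const_mul' _ _ ENNReal.ofReal_ne_top
    _ = ENNReal.ofReal C * ∫⁻ s in Set.Ioo (0 : ℝ) t, Fge s := by
        rw [time_reflect t Fge hFgeM]
    _ ≤ ENNReal.ofReal C * ∫⁻ s in Set.Ioc (0 : ℝ) t, Fge s := by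
        gcongr
        exact Set.Ioo_subset_Ioc_self
    _ ≤ ENNReal.ofReal C * Nmu d α lam μ t := by
        gcongr
        exact le_iSup (fun x' : EuclideanSpace ℝ (Fin d) =>
          ∫⁻ s in Set.Ioc (0 : ℝ) t, ∫⁻ y,
            ENNReal.ofReal (Gam d lam s (x' - y) + eta d α s (x' - y)) ∂μ) x

lemma duhamel_G (hC : 0 ≤ C) {Λ : ℝ} (hΛ : 0 ≤ Λ)
    (p : ℝ → EuclideanSpace ℝ (Fin d) → EuclideanSpace ℝ (Fin d) → ℝ)
    (hp0 : ∀ t ∈ Set.Ioc (0 : ℝ) 1, ∀ x y, 0 ≤ p t x y)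
    (hpb : ∀ t ∈ Set.Ioc (0 : ℝ) 1, ∀ x y,
      p t x y ≤ C * (Gam d lam t (x - y) + eta d α t (x - y)))
    (G : EuclideanSpace ℝ (Fin d) → EuclideanSpace ℝ (Fin d) → ℝ)
    (hG : Measurable (Function.uncurry G)) (hG0 : ∀ z w, 0 ≤ G z w)
    (c : EuclideanSpace ℝ (Fin d) → EuclideanSpace ℝ (Fin d) → ℝ)
    (hcI : ∀ z w, c z w ∈ Set.Icc (0 : ℝ) Λ)
    {t : ℝ} (ht : 0 < t) (ht1 : t ≤ 1) (x : EuclideanSpace ℝ (Fin d)) :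
    ∫⁻ s in Set.Ioc (0 : ℝ) t,
        ∫⁻ zw : EuclideanSpace ℝ (Fin d) × EuclideanSpace ℝ (Fin d),
          ENNReal.ofReal (p (t - s) x zw.1) *
            ENNReal.ofReal (c zw.1 zw.2 * G zw.1 zw.2 / ‖zw.1 - zw.2‖ ^ ((d : ℝ) + α)) ≤
      ENNReal.ofReal (C * Λ) * NF d α lam G t := by
  set Fge : ℝ → ℝ≥0∞ := fun u =>
    ∫⁻ zw : EuclideanSpace ℝ (Fin d) × EuclideanSpace ℝ (Fin d),
      ENNReal.ofReal ((Gam d lam u (x - zw.1) + eta d α u (x - zw.1)) *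
        (G zw.1 zw.2 + G zw.2 zw.1) / ‖zw.1 - zw.2‖ ^ ((d : ℝ) + α)) with hFge
  have hgm : Measurable (fun q : ℝ × (EuclideanSpace ℝ (Fin d) × EuclideanSpace ℝ (Fin d)) =>
      ENNReal.ofReal ((Gam d lam q.1 (x - q.2.1) + eta d α q.1 (x - q.2.1)) *
        (G q.2.1 q.2.2 + G q.2.2 q.2.1) / ‖q.2.1 - q.2.2‖ ^ ((d : ℝ) + α))) := by
    have h1 : Measurable fun q : ℝ × (EuclideanSpace ℝ (Fin d) × EuclideanSpace ℝ (Fin d)) =>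
        (q.1, x - q.2.1) := measurable_fst.prodMk (measurable_const.sub measurable_snd.fst)
    exact ENNReal.measurable_ofReal.comp
      (((((meas_gam d lam).comp h1).add ((meas_eta d α).comp h1)).mul
        ((hG.comp measurable_snd).add
          (hG.comp (measurable_snd.snd.prodMk measurable_snd.fst)))).div
        ((measurable_rpow_const _).comp (measurable_snd.fst.sub measurable_snd.snd).norm))
  have hFgeM : Measurable Fge := hgm.lintegral_prod_right'
  rw [restrict_Ioc_Ioo]
  calc ∫⁻ s in Set.Ioo (0 : ℝ) t,
        ∫⁻ zw : EuclideanSpace ℝ (Fin d) × EuclideanSpace ℝ (Fin d),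
          ENNReal.ofReal (p (t - s) x zw.1) *
            ENNReal.ofReal (c zw.1 zw.2 * G zw.1 zw.2 / ‖zw.1 - zw.2‖ ^ ((d : ℝ) + α))
      ≤ ∫⁻ s in Set.Ioo (0 : ℝ) t, ENNReal.ofReal (C * Λ) * Fge (t - s) := by
        refine setLIntegral_mono' measurableSet_Ioo fun s hs => ?_
        rw [Set.mem_Ioo] at hs
        have hts : t - s ∈ Set.Ioc (0:ℝ) 1 := ⟨by linarith [hs.2], by linarith [hs.1]⟩
        rw [hFge, ← lintegral_const_mul' _ _ ENNReal.ofReal_ne_top]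
        refine lintegral_mono fun zw => ?_
        rw [← ENNReal.ofReal_mul (hp0 _ hts x zw.1), ← ENNReal.ofReal_mul (mul_nonneg hC hΛ)]
        refine ENNReal.ofReal_le_ofReal ?_
        have hr0 : (0:ℝ) ≤ ‖zw.1 - zw.2‖ ^ ((d : ℝ) + α) := Real.rpow_nonneg (norm_nonneg _) _
        have h3 : c zw.1 zw.2 * G zw.1 zw.2 / ‖zw.1 - zw.2‖ ^ ((d : ℝ) + α) ≤
            Λ * (G zw.1 zw.2 + G zw.2 zw.1) / ‖zw.1 - zw.2‖ ^ ((d : ℝ) + α) := by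
          rw [div_eq_mul_inv, div_eq_mul_inv]
          refine mul_le_mul_of_nonneg_right ?_ (inv_nonneg.mpr hr0)
          exact mul_le_mul (hcI zw.1 zw.2).2 (le_add_of_nonneg_right (hG0 zw.2 zw.1))
            (hG0 zw.1 zw.2) hΛ
        calc p (t - s) x zw.1 * (c zw.1 zw.2 * G zw.1 zw.2 / ‖zw.1 - zw.2‖ ^ ((d : ℝ) + α))
            ≤ (C * (Gam d lam (t - s) (x - zw.1) + eta d α (t - s) (x - zw.1))) *
              (Λ * (G zw.1 zw.2 + G zw.2 zw.1) / ‖zw.1 - zw.2‖ ^ ((d : ℝ) + α)) := by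
              have hge : (0:ℝ) ≤ Gam d lam (t - s) (x - zw.1) + eta d α (t - s) (x - zw.1) :=
                add_nonneg (gam_pos d hts.1 _).le (eta_nonneg d _ hts.1.le)
              have hdiv : (0:ℝ) ≤ c zw.1 zw.2 * G zw.1 zw.2 / ‖zw.1 - zw.2‖ ^ ((d : ℝ) + α) :=
                div_nonneg (mul_nonneg (hcI zw.1 zw.2).1 (hG0 zw.1 zw.2)) hr0
              exact mul_le_mul (hpb _ hts x zw.1) h3 hdiv (mul_nonneg hC hge)
          _ = C * Λ * ((Gam d lam (t - s) (x - zw.1) + eta d α (t - s) (x - zw.1)) *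
              (G zw.1 zw.2 + G zw.2 zw.1) / ‖zw.1 - zw.2‖ ^ ((d : ℝ) + α)) := by ring
    _ = ENNReal.ofReal (C * Λ) * ∫⁻ s in Set.Ioo (0 : ℝ) t, Fge (t - s) :=
        lintegral_const_mul' _ _ ENNReal.ofReal_ne_top
    _ = ENNReal.ofReal (C * Λ) * ∫⁻ s in Set.Ioo (0 : ℝ) t, Fge s := by
        rw [time_reflect t Fge hFgeM]
    _ ≤ ENNReal.ofReal (C * Λ) * ∫⁻ s in Set.Ioc (0 : ℝ) t, Fge s := by
        gcongr
        exact Set.Ioo_subset_Ioc_self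
    _ ≤ ENNReal.ofReal (C * Λ) * NF d α lam G t := by
        gcongr
        exact le_iSup (fun y : EuclideanSpace ℝ (Fin d) =>
          ∫⁻ s in Set.Ioc (0 : ℝ) t,
            ∫⁻ zw : EuclideanSpace ℝ (Fin d) × EuclideanSpace ℝ (Fin d),
              ENNReal.ofReal ((Gam d lam s (y - zw.1) + eta d α s (y - zw.1)) *
                (G zw.1 zw.2 + G zw.2 zw.1) / ‖zw.1 - zw.2‖ ^ ((d : ℝ) + α))) x

end Duhamel

section MeasQ

variable {d : ℕ}

lemma meas_q_step (α : ℝ)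
    (p : ℝ → EuclideanSpace ℝ (Fin d) → EuclideanSpace ℝ (Fin d) → ℝ)
    (hp : Measurable (fun q : ℝ × EuclideanSpace ℝ (Fin d) × EuclideanSpace ℝ (Fin d) =>
      p q.1 q.2.1 q.2.2))
    (μ : Measure (EuclideanSpace ℝ (Fin d))) [SigmaFinite μ]
    (G : EuclideanSpace ℝ (Fin d) → EuclideanSpace ℝ (Fin d) → ℝ)
    (hG : Measurable (Function.uncurry G))
    (c : EuclideanSpace ℝ (Fin d) → EuclideanSpace ℝ (Fin d) → ℝ)
    (hc : Measurable (Function.uncurry c))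
    (qk qk1 : ℝ → EuclideanSpace ℝ (Fin d) → EuclideanSpace ℝ (Fin d) → ℝ≥0∞)
    (hmqk : Measurable fun r : ℝ × EuclideanSpace ℝ (Fin d) × EuclideanSpace ℝ (Fin d) =>
      qk r.1 r.2.1 r.2.2)
    (hrec : ∀ t x y, qk1 t x y =
      (∫⁻ s in Set.Ioc (0 : ℝ) t, ∫⁻ z,
          ENNReal.ofReal (p (t - s) x z) * qk s z y ∂μ) +
      ∫⁻ s in Set.Ioc (0 : ℝ) t,
        ∫⁻ zw : EuclideanSpace ℝ (Fin d) × EuclideanSpace ℝ (Fin d),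
          ENNReal.ofReal (p (t - s) x zw.1) * qk s zw.2 y *
            ENNReal.ofReal (c zw.1 zw.2 * G zw.1 zw.2 /
              ‖zw.1 - zw.2‖ ^ ((d : ℝ) + α))) :
    Measurable fun r : ℝ × EuclideanSpace ℝ (Fin d) × EuclideanSpace ℝ (Fin d) =>
      qk1 r.1 r.2.1 r.2.2 := by
  have hset : MeasurableSet {q : (ℝ × EuclideanSpace ℝ (Fin d) × EuclideanSpace ℝ (Fin d)) × ℝ |
      q.2 ∈ Set.Ioc 0 q.1.1} := by
    have heq : {q : (ℝ × EuclideanSpace ℝ (Fin d) × EuclideanSpace ℝ (Fin d)) × ℝ |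
        q.2 ∈ Set.Ioc 0 q.1.1} =
        {q : (ℝ × EuclideanSpace ℝ (Fin d) × EuclideanSpace ℝ (Fin d)) × ℝ | 0 < q.2} ∩
        {q | q.2 ≤ q.1.1} := by
      ext q
      simp [Set.mem_Ioc]
    rw [heq]
    exact (measurableSet_lt measurable_const measurable_snd).inter
      (measurableSet_le measurable_snd measurable_fst.fst)
  have hg1 : Measurable fun q : (ℝ × EuclideanSpace ℝ (Fin d) × EuclideanSpace ℝ (Fin d)) × ℝ =>
      ∫⁻ z, ENNReal.ofReal (p (q.1.1 - q.2) q.1.2.1 z) * qk q.2 z q.1.2.2 ∂μ := by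
    have hinner : Measurable fun w :
        ((ℝ × EuclideanSpace ℝ (Fin d) × EuclideanSpace ℝ (Fin d)) × ℝ) ×
          EuclideanSpace ℝ (Fin d) =>
        ENNReal.ofReal (p (w.1.1.1 - w.1.2) w.1.1.2.1 w.2) * qk w.1.2 w.2 w.1.1.2.2 :=
      (ENNReal.measurable_ofReal.comp (hp.comp
        ((measurable_fst.fst.fst.sub measurable_fst.snd).prodMk
          (measurable_fst.fst.snd.fst.prodMk measurable_snd)))).mul
        (hmqk.comp (measurable_fst.snd.prodMk
          (measurable_snd.prodMk measurable_fst.fst.snd.snd)))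
    exact hinner.lintegral_prod_right'
  have hg2 : Measurable fun q : (ℝ × EuclideanSpace ℝ (Fin d) × EuclideanSpace ℝ (Fin d)) × ℝ =>
      ∫⁻ zw : EuclideanSpace ℝ (Fin d) × EuclideanSpace ℝ (Fin d),
        ENNReal.ofReal (p (q.1.1 - q.2) q.1.2.1 zw.1) * qk q.2 zw.2 q.1.2.2 *
          ENNReal.ofReal (c zw.1 zw.2 * G zw.1 zw.2 / ‖zw.1 - zw.2‖ ^ ((d : ℝ) + α)) := by
    have hinner : Measurable fun w :
        ((ℝ × EuclideanSpace ℝ (Fin d) × EuclideanSpace ℝ (Fin d)) × ℝ) ×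
          (EuclideanSpace ℝ (Fin d) × EuclideanSpace ℝ (Fin d)) =>
        ENNReal.ofReal (p (w.1.1.1 - w.1.2) w.1.1.2.1 w.2.1) * qk w.1.2 w.2.2 w.1.1.2.2 *
          ENNReal.ofReal (c w.2.1 w.2.2 * G w.2.1 w.2.2 / ‖w.2.1 - w.2.2‖ ^ ((d : ℝ) + α)) := by
      refine Measurable.mul (Measurable.mul ?_ ?_) ?_
      · exact ENNReal.measurable_ofReal.comp (hp.comp
          ((measurable_fst.fst.fst.sub measurable_fst.snd).prodMk
            (measurable_fst.fst.snd.fst.prodMk measurable_snd.fst)))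
      · exact hmqk.comp (measurable_fst.snd.prodMk
          (measurable_snd.snd.prodMk measurable_fst.fst.snd.snd))
      · exact ENNReal.measurable_ofReal.comp
          (((hc.comp measurable_snd).mul (hG.comp measurable_snd)).div
            ((measurable_rpow_const _).comp (measurable_snd.fst.sub measurable_snd.snd).norm))
    exact hinner.lintegral_prod_right'
  have hT1 : Measurable fun r : ℝ × EuclideanSpace ℝ (Fin d) × EuclideanSpace ℝ (Fin d) =>
      ∫⁻ s in Set.Ioc (0 : ℝ) r.1, ∫⁻ z,
        ENNReal.ofReal (p (r.1 - s) r.2.1 z) * qk s z r.2.2 ∂μ := by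
    have heq : (fun r : ℝ × EuclideanSpace ℝ (Fin d) × EuclideanSpace ℝ (Fin d) =>
        ∫⁻ s in Set.Ioc (0 : ℝ) r.1, ∫⁻ z,
          ENNReal.ofReal (p (r.1 - s) r.2.1 z) * qk s z r.2.2 ∂μ) = fun r => ∫⁻ s,
        ({q : (ℝ × EuclideanSpace ℝ (Fin d) × EuclideanSpace ℝ (Fin d)) × ℝ |
            q.2 ∈ Set.Ioc 0 q.1.1}.indicator
          (fun q => ∫⁻ z,
            ENNReal.ofReal (p (q.1.1 - q.2) q.1.2.1 z) * qk q.2 z q.1.2.2 ∂μ)) (r, s) := by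
      funext r
      rw [← lintegral_indicator measurableSet_Ioc]
      congr 1
    rw [heq]
    exact (hg1.indicator hset).lintegral_prod_right'
  have hT2 : Measurable fun r : ℝ × EuclideanSpace ℝ (Fin d) × EuclideanSpace ℝ (Fin d) =>
      ∫⁻ s in Set.Ioc (0 : ℝ) r.1,
        ∫⁻ zw : EuclideanSpace ℝ (Fin d) × EuclideanSpace ℝ (Fin d),
          ENNReal.ofReal (p (r.1 - s) r.2.1 zw.1) * qk s zw.2 r.2.2 *
            ENNReal.ofReal (c zw.1 zw.2 * G zw.1 zw.2 / ‖zw.1 - zw.2‖ ^ ((d : ℝ) + α)) := by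
    have heq : (fun r : ℝ × EuclideanSpace ℝ (Fin d) × EuclideanSpace ℝ (Fin d) =>
        ∫⁻ s in Set.Ioc (0 : ℝ) r.1,
          ∫⁻ zw : EuclideanSpace ℝ (Fin d) × EuclideanSpace ℝ (Fin d),
            ENNReal.ofReal (p (r.1 - s) r.2.1 zw.1) * qk s zw.2 r.2.2 *
              ENNReal.ofReal (c zw.1 zw.2 * G zw.1 zw.2 / ‖zw.1 - zw.2‖ ^ ((d : ℝ) + α))) =
        fun r => ∫⁻ s,
        ({q : (ℝ × EuclideanSpace ℝ (Fin d) × EuclideanSpace ℝ (Fin d)) × ℝ |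
            q.2 ∈ Set.Ioc 0 q.1.1}.indicator
          (fun q => ∫⁻ zw : EuclideanSpace ℝ (Fin d) × EuclideanSpace ℝ (Fin d),
            ENNReal.ofReal (p (q.1.1 - q.2) q.1.2.1 zw.1) * qk q.2 zw.2 q.1.2.2 *
              ENNReal.ofReal (c zw.1 zw.2 * G zw.1 zw.2 /
                ‖zw.1 - zw.2‖ ^ ((d : ℝ) + α)))) (r, s) := by
      funext r
      rw [← lintegral_indicator measurableSet_Ioc]
      congr 1
    rw [heq]
    exact (hg2.indicator hset).lintegral_prod_right'
  have heq2 : (fun r : ℝ × EuclideanSpace ℝ (Fin d) × EuclideanSpace ℝ (Fin d) =>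
      qk1 r.1 r.2.1 r.2.2) = fun r =>
      (∫⁻ s in Set.Ioc (0 : ℝ) r.1, ∫⁻ z,
        ENNReal.ofReal (p (r.1 - s) r.2.1 z) * qk s z r.2.2 ∂μ) +
      ∫⁻ s in Set.Ioc (0 : ℝ) r.1,
        ∫⁻ zw : EuclideanSpace ℝ (Fin d) × EuclideanSpace ℝ (Fin d),
          ENNReal.ofReal (p (r.1 - s) r.2.1 zw.1) * qk s zw.2 r.2.2 *
            ENNReal.ofReal (c zw.1 zw.2 * G zw.1 zw.2 / ‖zw.1 - zw.2‖ ^ ((d : ℝ) + α)) := by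
    funext r
    exact hrec r.1 r.2.1 r.2.2
  rw [heq2]
  exact hT1.add hT2

end MeasQ

section Step

variable {d : ℕ} {α lam C : ℝ}

lemma step_bound (hα1 : 0 < α) (hα2 : α < 2) (hlam : 0 < lam) (hC : 0 ≤ C)
    {Λ : ℝ} (hΛ : 0 ≤ Λ)
    (p : ℝ → EuclideanSpace ℝ (Fin d) → EuclideanSpace ℝ (Fin d) → ℝ)
    (hp : Measurable (fun q : ℝ × EuclideanSpace ℝ (Fin d) × EuclideanSpace ℝ (Fin d) =>
      p q.1 q.2.1 q.2.2))
    (hp0 : ∀ t ∈ Set.Ioc (0 : ℝ) 1, ∀ x y, 0 ≤ p t x y)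
    (hpb : ∀ t ∈ Set.Ioc (0 : ℝ) 1, ∀ x y,
      p t x y ≤ C * (Gam d lam t (x - y) + eta d α t (x - y)))
    (μ : Measure (EuclideanSpace ℝ (Fin d))) [SigmaFinite μ]
    (G : EuclideanSpace ℝ (Fin d) → EuclideanSpace ℝ (Fin d) → ℝ)
    (hG : Measurable (Function.uncurry G)) (hG0 : ∀ z w, 0 ≤ G z w)
    (c : EuclideanSpace ℝ (Fin d) → EuclideanSpace ℝ (Fin d) → ℝ)
    (hc : Measurable (Function.uncurry c))
    (hcI : ∀ z w, c z w ∈ Set.Icc (0 : ℝ) Λ)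
    (qk qk1 : ℝ → EuclideanSpace ℝ (Fin d) → EuclideanSpace ℝ (Fin d) → ℝ≥0∞)
    (hmqk : Measurable fun r : ℝ × EuclideanSpace ℝ (Fin d) × EuclideanSpace ℝ (Fin d) =>
      qk r.1 r.2.1 r.2.2)
    (hrec : ∀ t x y, qk1 t x y =
      (∫⁻ s in Set.Ioc (0 : ℝ) t, ∫⁻ z,
          ENNReal.ofReal (p (t - s) x z) * qk s z y ∂μ) +
      ∫⁻ s in Set.Ioc (0 : ℝ) t,
        ∫⁻ zw : EuclideanSpace ℝ (Fin d) × EuclideanSpace ℝ (Fin d),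
          ENNReal.ofReal (p (t - s) x zw.1) * qk s zw.2 y *
            ENNReal.ofReal (c zw.1 zw.2 * G zw.1 zw.2 /
              ‖zw.1 - zw.2‖ ^ ((d : ℝ) + α)))
    {t : ℝ} (ht : 0 < t) (ht1 : t ≤ 1) (B : ℝ≥0∞)
    (hIH : ∀ s ∈ Set.Ioc (0 : ℝ) t, ∀ z, ∫⁻ y, qk s z y ≤ B)
    (x : EuclideanSpace ℝ (Fin d)) :
    ∫⁻ y, qk1 t x y ≤
      B * (ENNReal.ofReal C * Nmu d α lam μ t +
        ENNReal.ofReal (C * Λ) * NF d α lam G t) := by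
  -- measurability of the inner integrands
  have hi1 : Measurable fun w : (EuclideanSpace ℝ (Fin d) × ℝ) × EuclideanSpace ℝ (Fin d) =>
      ENNReal.ofReal (p (t - w.1.2) x w.2) * qk w.1.2 w.2 w.1.1 :=
    (ENNReal.measurable_ofReal.comp (hp.comp
      ((measurable_const.sub measurable_fst.snd).prodMk
        (measurable_const.prodMk measurable_snd)))).mul
      (hmqk.comp (measurable_fst.snd.prodMk (measurable_snd.prodMk measurable_fst.fst)))
  have hg1 : Measurable fun v : EuclideanSpace ℝ (Fin d) × ℝ =>
      ∫⁻ z, ENNReal.ofReal (p (t - v.2) x z) * qk v.2 z v.1 ∂μ :=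
    hi1.lintegral_prod_right'
  have hi2 : Measurable fun w : (EuclideanSpace ℝ (Fin d) × ℝ) ×
      (EuclideanSpace ℝ (Fin d) × EuclideanSpace ℝ (Fin d)) =>
      ENNReal.ofReal (p (t - w.1.2) x w.2.1) * qk w.1.2 w.2.2 w.1.1 *
        ENNReal.ofReal (c w.2.1 w.2.2 * G w.2.1 w.2.2 / ‖w.2.1 - w.2.2‖ ^ ((d : ℝ) + α)) := by
    refine Measurable.mul (Measurable.mul ?_ ?_) ?_
    · exact ENNReal.measurable_ofReal.comp (hp.comp
        ((measurable_const.sub measurable_fst.snd).prodMk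
          (measurable_const.prodMk measurable_snd.fst)))
    · exact hmqk.comp (measurable_fst.snd.prodMk
        (measurable_snd.snd.prodMk measurable_fst.fst))
    · exact ENNReal.measurable_ofReal.comp
        (((hc.comp measurable_snd).mul (hG.comp measurable_snd)).div
          ((measurable_rpow_const _).comp (measurable_snd.fst.sub measurable_snd.snd).norm))
  have hg2 : Measurable fun v : EuclideanSpace ℝ (Fin d) × ℝ =>
      ∫⁻ zw : EuclideanSpace ℝ (Fin d) × EuclideanSpace ℝ (Fin d),
        ENNReal.ofReal (p (t - v.2) x zw.1) * qk v.2 zw.2 v.1 *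
          ENNReal.ofReal (c zw.1 zw.2 * G zw.1 zw.2 / ‖zw.1 - zw.2‖ ^ ((d : ℝ) + α)) :=
    hi2.lintegral_prod_right'
  have hT1m : Measurable fun y : EuclideanSpace ℝ (Fin d) =>
      ∫⁻ s in Set.Ioc (0 : ℝ) t, ∫⁻ z, ENNReal.ofReal (p (t - s) x z) * qk s z y ∂μ :=
    hg1.lintegral_prod_right'
  simp only [hrec]
  rw [lintegral_add_left hT1m]
  have hbound1 : ∫⁻ y, ∫⁻ s in Set.Ioc (0 : ℝ) t, ∫⁻ z,
      ENNReal.ofReal (p (t - s) x z) * qk s z y ∂μ ≤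
      B * (ENNReal.ofReal C * Nmu d α lam μ t) := by
    have hFz : Measurable fun s : ℝ => ∫⁻ z, ENNReal.ofReal (p (t - s) x z) ∂μ :=
      Measurable.lintegral_prod_right'
        (ENNReal.measurable_ofReal.comp (hp.comp
          ((measurable_const.sub measurable_fst).prodMk
            (measurable_const.prodMk measurable_snd))))
    calc ∫⁻ y, ∫⁻ s in Set.Ioc (0 : ℝ) t, ∫⁻ z,
        ENNReal.ofReal (p (t - s) x z) * qk s z y ∂μ
        = ∫⁻ s in Set.Ioc (0 : ℝ) t, ∫⁻ y, ∫⁻ z,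
            ENNReal.ofReal (p (t - s) x z) * qk s z y ∂μ :=
          lintegral_lintegral_swap hg1.aemeasurable
      _ = ∫⁻ s in Set.Ioc (0 : ℝ) t, ∫⁻ z, (∫⁻ y,
            ENNReal.ofReal (p (t - s) x z) * qk s z y) ∂μ := by
          refine lintegral_congr fun s => ?_
          have hin : Measurable fun w : EuclideanSpace ℝ (Fin d) × EuclideanSpace ℝ (Fin d) =>
              ENNReal.ofReal (p (t - s) x w.2) * qk s w.2 w.1 :=
            (ENNReal.measurable_ofReal.comp (hp.comp
              (measurable_const.prodMk (measurable_const.prodMk measurable_snd)))).mul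
              (hmqk.comp (measurable_const.prodMk (measurable_snd.prodMk measurable_fst)))
          exact lintegral_lintegral_swap hin.aemeasurable
      _ = ∫⁻ s in Set.Ioc (0 : ℝ) t, ∫⁻ z,
            (ENNReal.ofReal (p (t - s) x z) * ∫⁻ y, qk s z y) ∂μ :=
          lintegral_congr fun s => lintegral_congr fun z =>
            lintegral_const_mul' _ _ ENNReal.ofReal_ne_top
      _ ≤ ∫⁻ s in Set.Ioc (0 : ℝ) t, ∫⁻ z, (ENNReal.ofReal (p (t - s) x z) * B) ∂μ :=
          setLIntegral_mono' measurableSet_Ioc fun s hs =>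
            lintegral_mono fun z => mul_le_mul_right (hIH s hs z) _
      _ = ∫⁻ s in Set.Ioc (0 : ℝ) t, B * ∫⁻ z, ENNReal.ofReal (p (t - s) x z) ∂μ := by
          refine lintegral_congr fun s => ?_
          simp_rw [mul_comm _ B]
          exact lintegral_const_mul B (ENNReal.measurable_ofReal.comp (hp.comp
            (measurable_const.prodMk (measurable_const.prodMk measurable_id))))
      _ = B * ∫⁻ s in Set.Ioc (0 : ℝ) t, ∫⁻ z, ENNReal.ofReal (p (t - s) x z) ∂μ :=
          lintegral_const_mul B hFz
      _ ≤ B * (ENNReal.ofReal C * Nmu d α lam μ t) :=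
          mul_le_mul_right (duhamel_mu hα1 hα2 hlam hC p hpb μ ht ht1 x) B
  have hbound2 : ∫⁻ y, ∫⁻ s in Set.Ioc (0 : ℝ) t,
      ∫⁻ zw : EuclideanSpace ℝ (Fin d) × EuclideanSpace ℝ (Fin d),
        ENNReal.ofReal (p (t - s) x zw.1) * qk s zw.2 y *
          ENNReal.ofReal (c zw.1 zw.2 * G zw.1 zw.2 / ‖zw.1 - zw.2‖ ^ ((d : ℝ) + α)) ≤
      B * (ENNReal.ofReal (C * Λ) * NF d α lam G t) := by
    have hzwm : ∀ s : ℝ, Measurable fun zw : EuclideanSpace ℝ (Fin d) ×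
        EuclideanSpace ℝ (Fin d) => ENNReal.ofReal (p (t - s) x zw.1) *
          ENNReal.ofReal (c zw.1 zw.2 * G zw.1 zw.2 / ‖zw.1 - zw.2‖ ^ ((d : ℝ) + α)) := by
      intro s
      refine Measurable.mul (f := fun zw : EuclideanSpace ℝ (Fin d) × EuclideanSpace ℝ (Fin d) =>
        ENNReal.ofReal (p (t - s) x zw.1)) (g := fun zw : EuclideanSpace ℝ (Fin d) ×
        EuclideanSpace ℝ (Fin d) => ENNReal.ofReal (c zw.1 zw.2 * G zw.1 zw.2 /
          ‖zw.1 - zw.2‖ ^ ((d : ℝ) + α))) ?_ ?_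
      · exact ENNReal.measurable_ofReal.comp (hp.comp
          (measurable_const.prodMk (measurable_const.prodMk measurable_fst)))
      · exact ENNReal.measurable_ofReal.comp
          ((hc.mul hG).div
            ((measurable_rpow_const _).comp (measurable_fst.sub measurable_snd).norm))
    have hF2 : Measurable fun s : ℝ =>
        ∫⁻ zw : EuclideanSpace ℝ (Fin d) × EuclideanSpace ℝ (Fin d),
          ENNReal.ofReal (p (t - s) x zw.1) *
            ENNReal.ofReal (c zw.1 zw.2 * G zw.1 zw.2 / ‖zw.1 - zw.2‖ ^ ((d : ℝ) + α)) := by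
      have hin2 : Measurable fun w : ℝ ×
          (EuclideanSpace ℝ (Fin d) × EuclideanSpace ℝ (Fin d)) =>
          ENNReal.ofReal (p (t - w.1) x w.2.1) *
            ENNReal.ofReal (c w.2.1 w.2.2 * G w.2.1 w.2.2 /
              ‖w.2.1 - w.2.2‖ ^ ((d : ℝ) + α)) := by
        refine Measurable.mul (f := fun w : ℝ × (EuclideanSpace ℝ (Fin d) ×
          EuclideanSpace ℝ (Fin d)) => ENNReal.ofReal (p (t - w.1) x w.2.1))
          (g := fun w : ℝ × (EuclideanSpace ℝ (Fin d) × EuclideanSpace ℝ (Fin d)) =>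
            ENNReal.ofReal (c w.2.1 w.2.2 * G w.2.1 w.2.2 /
              ‖w.2.1 - w.2.2‖ ^ ((d : ℝ) + α))) ?_ ?_
        · exact ENNReal.measurable_ofReal.comp (hp.comp
            ((measurable_const.sub measurable_fst).prodMk
              (measurable_const.prodMk measurable_snd.fst)))
        · exact ENNReal.measurable_ofReal.comp
            (((hc.comp measurable_snd).mul (hG.comp measurable_snd)).div
              ((measurable_rpow_const _).comp (measurable_snd.fst.sub measurable_snd.snd).norm))
      exact hin2.lintegral_prod_right'
    calc ∫⁻ y, ∫⁻ s in Set.Ioc (0 : ℝ) t,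
        ∫⁻ zw : EuclideanSpace ℝ (Fin d) × EuclideanSpace ℝ (Fin d),
          ENNReal.ofReal (p (t - s) x zw.1) * qk s zw.2 y *
            ENNReal.ofReal (c zw.1 zw.2 * G zw.1 zw.2 / ‖zw.1 - zw.2‖ ^ ((d : ℝ) + α))
        = ∫⁻ s in Set.Ioc (0 : ℝ) t, ∫⁻ y,
            ∫⁻ zw : EuclideanSpace ℝ (Fin d) × EuclideanSpace ℝ (Fin d),
              ENNReal.ofReal (p (t - s) x zw.1) * qk s zw.2 y *
                ENNReal.ofReal (c zw.1 zw.2 * G zw.1 zw.2 /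
                  ‖zw.1 - zw.2‖ ^ ((d : ℝ) + α)) :=
          lintegral_lintegral_swap hg2.aemeasurable
      _ = ∫⁻ s in Set.Ioc (0 : ℝ) t,
            ∫⁻ zw : EuclideanSpace ℝ (Fin d) × EuclideanSpace ℝ (Fin d), ∫⁻ y,
              ENNReal.ofReal (p (t - s) x zw.1) * qk s zw.2 y *
                ENNReal.ofReal (c zw.1 zw.2 * G zw.1 zw.2 /
                  ‖zw.1 - zw.2‖ ^ ((d : ℝ) + α)) := by
          refine lintegral_congr fun s => ?_
          have hin : Measurable fun w : EuclideanSpace ℝ (Fin d) ×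
              (EuclideanSpace ℝ (Fin d) × EuclideanSpace ℝ (Fin d)) =>
              ENNReal.ofReal (p (t - s) x w.2.1) * qk s w.2.2 w.1 *
                ENNReal.ofReal (c w.2.1 w.2.2 * G w.2.1 w.2.2 /
                  ‖w.2.1 - w.2.2‖ ^ ((d : ℝ) + α)) := by
            refine Measurable.mul (Measurable.mul ?_ ?_) ?_
            · exact ENNReal.measurable_ofReal.comp (hp.comp
                (measurable_const.prodMk (measurable_const.prodMk measurable_snd.fst)))
            · exact hmqk.comp (measurable_const.prodMk
                (measurable_snd.snd.prodMk measurable_fst))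
            · exact ENNReal.measurable_ofReal.comp
                (((hc.comp measurable_snd).mul (hG.comp measurable_snd)).div
                  ((measurable_rpow_const _).comp
                    (measurable_snd.fst.sub measurable_snd.snd).norm))
          exact lintegral_lintegral_swap hin.aemeasurable
      _ = ∫⁻ s in Set.Ioc (0 : ℝ) t,
            ∫⁻ zw : EuclideanSpace ℝ (Fin d) × EuclideanSpace ℝ (Fin d),
              (ENNReal.ofReal (p (t - s) x zw.1) *
                ENNReal.ofReal (c zw.1 zw.2 * G zw.1 zw.2 /
                  ‖zw.1 - zw.2‖ ^ ((d : ℝ) + α))) * ∫⁻ y, qk s zw.2 y := by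
          refine lintegral_congr fun s => lintegral_congr fun zw => ?_
          rw [show (fun y => ENNReal.ofReal (p (t - s) x zw.1) * qk s zw.2 y *
              ENNReal.ofReal (c zw.1 zw.2 * G zw.1 zw.2 /
                ‖zw.1 - zw.2‖ ^ ((d : ℝ) + α))) = fun y =>
              (ENNReal.ofReal (p (t - s) x zw.1) *
                ENNReal.ofReal (c zw.1 zw.2 * G zw.1 zw.2 /
                  ‖zw.1 - zw.2‖ ^ ((d : ℝ) + α))) * qk s zw.2 y from
            funext fun y => mul_right_comm _ _ _]
          exact lintegral_const_mul' _ _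
            (ENNReal.mul_ne_top ENNReal.ofReal_ne_top ENNReal.ofReal_ne_top)
      _ ≤ ∫⁻ s in Set.Ioc (0 : ℝ) t,
            ∫⁻ zw : EuclideanSpace ℝ (Fin d) × EuclideanSpace ℝ (Fin d),
              (ENNReal.ofReal (p (t - s) x zw.1) *
                ENNReal.ofReal (c zw.1 zw.2 * G zw.1 zw.2 /
                  ‖zw.1 - zw.2‖ ^ ((d : ℝ) + α))) * B :=
          setLIntegral_mono' measurableSet_Ioc fun s hs =>
            lintegral_mono fun zw => mul_le_mul_right (hIH s hs zw.2) _
      _ = ∫⁻ s in Set.Ioc (0 : ℝ) t,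
            B * ∫⁻ zw : EuclideanSpace ℝ (Fin d) × EuclideanSpace ℝ (Fin d),
              ENNReal.ofReal (p (t - s) x zw.1) *
                ENNReal.ofReal (c zw.1 zw.2 * G zw.1 zw.2 /
                  ‖zw.1 - zw.2‖ ^ ((d : ℝ) + α)) := by
          refine lintegral_congr fun s => ?_
          simp_rw [mul_comm _ B]
          exact lintegral_const_mul B (hzwm s)
      _ = B * ∫⁻ s in Set.Ioc (0 : ℝ) t,
            ∫⁻ zw : EuclideanSpace ℝ (Fin d) × EuclideanSpace ℝ (Fin d),
              ENNReal.ofReal (p (t - s) x zw.1) *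
                ENNReal.ofReal (c zw.1 zw.2 * G zw.1 zw.2 /
                  ‖zw.1 - zw.2‖ ^ ((d : ℝ) + α)) :=
          lintegral_const_mul B hF2
      _ ≤ B * (ENNReal.ofReal (C * Λ) * NF d α lam G t) :=
          mul_le_mul_right (duhamel_G hC hΛ p hp0 hpb G hG hG0 c hcI ht ht1 x) B
  calc (∫⁻ y, ∫⁻ s in Set.Ioc (0 : ℝ) t, ∫⁻ z,
        ENNReal.ofReal (p (t - s) x z) * qk s z y ∂μ) +
      ∫⁻ y, ∫⁻ s in Set.Ioc (0 : ℝ) t,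
        ∫⁻ zw : EuclideanSpace ℝ (Fin d) × EuclideanSpace ℝ (Fin d),
          ENNReal.ofReal (p (t - s) x zw.1) * qk s zw.2 y *
            ENNReal.ofReal (c zw.1 zw.2 * G zw.1 zw.2 / ‖zw.1 - zw.2‖ ^ ((d : ℝ) + α))
      ≤ B * (ENNReal.ofReal C * Nmu d α lam μ t) +
        B * (ENNReal.ofReal (C * Λ) * NF d α lam G t) := add_le_add hbound1 hbound2
    _ = B * (ENNReal.ofReal C * Nmu d α lam μ t +
        ENNReal.ofReal (C * Λ) * NF d α lam G t) := (mul_add B _ _).symm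

end Step

/-- L¹-bound on the iterated perturbation kernels q⁽ᵏ⁾. -/
theorem stmt17 (d : ℕ) (hd : 2 ≤ d) (α : ℝ) (hα1 : 0 < α) (hα2 : α < 2)
    (C lam Λ : ℝ) (hC : 1 ≤ C) (hlam : 0 < lam) (hΛ : 0 < Λ) :
    ∃ C₀ M : ℝ, 1 ≤ C₀ ∧ 1 ≤ M ∧
      ∀ p : ℝ → EuclideanSpace ℝ (Fin d) → EuclideanSpace ℝ (Fin d) → ℝ,
        Measurable (fun q : ℝ × EuclideanSpace ℝ (Fin d) × EuclideanSpace ℝ (Fin d) =>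
          p q.1 q.2.1 q.2.2) →
        (∀ t ∈ Set.Ioc (0 : ℝ) 1, ∀ x y, 0 ≤ p t x y) →
        (∀ t ∈ Set.Ioc (0 : ℝ) 1, ∀ x y,
          p t x y ≤ C * (Gam d lam t (x - y) + eta d α t (x - y))) →
        ∀ (μ : Measure (EuclideanSpace ℝ (Fin d)))
          (G : EuclideanSpace ℝ (Fin d) → EuclideanSpace ℝ (Fin d) → ℝ),
          Measurable (Function.uncurry G) → (∀ z w, 0 ≤ G z w) →
          (∃ B : ℝ, ∀ z w, G z w ≤ B) →
          ∀ c : EuclideanSpace ℝ (Fin d) → EuclideanSpace ℝ (Fin d) → ℝ,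
            Measurable (Function.uncurry c) → (∀ z w, c z w ∈ Set.Icc (0 : ℝ) Λ) →
            ∀ q : ℕ → ℝ → EuclideanSpace ℝ (Fin d) → EuclideanSpace ℝ (Fin d) → ℝ≥0∞,
              (∀ t x y, q 0 t x y = ENNReal.ofReal (p t x y)) →
              (∀ k t x y, q (k + 1) t x y =
                (∫⁻ s in Set.Ioc (0 : ℝ) t, ∫⁻ z,
                    ENNReal.ofReal (p (t - s) x z) * q k s z y ∂μ) +
                ∫⁻ s in Set.Ioc (0 : ℝ) t,
                  ∫⁻ zw : EuclideanSpace ℝ (Fin d) × EuclideanSpace ℝ (Fin d),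
                    ENNReal.ofReal (p (t - s) x zw.1) * q k s zw.2 y *
                      ENNReal.ofReal (c zw.1 zw.2 * G zw.1 zw.2 /
                        ‖zw.1 - zw.2‖ ^ ((d : ℝ) + α))) →
              ∀ (k : ℕ), ∀ t ∈ Set.Ioc (0 : ℝ) 1, ∀ x : EuclideanSpace ℝ (Fin d),
                (∫⁻ y, q k t x y)
                  ≤ ENNReal.ofReal C₀ *
                      (ENNReal.ofReal M * (Nmu d α lam μ t + NF d α lam G t)) ^ k := by
  classical
  refine ⟨max 1 (C * (Kc d α lam).toReal), max 1 (C * (1 + Λ)),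
    le_max_left _ _, le_max_left _ _, ?_⟩
  intro p hp hp0 hpb μ G hG hG0 hGb c hc hcI q hq0 hqrec k t ht x
  set C₀ : ℝ := max 1 (C * (Kc d α lam).toReal) with hC₀def
  set M : ℝ := max 1 (C * (1 + Λ)) with hMdef
  have hC0' : (0:ℝ) ≤ C := by linarith
  have hC₀1 : (1:ℝ) ≤ C₀ := le_max_left _ _
  have hM1 : (1:ℝ) ≤ M := le_max_left _ _
  have hCM : C ≤ M := le_trans (by nlinarith) (le_max_right _ _)
  have hCΛM : C * Λ ≤ M := le_trans (by nlinarith) (le_max_right _ _)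
  -- the base (k = 0) estimate
  have base : ∀ u ∈ Set.Ioc (0:ℝ) 1, ∀ x' : EuclideanSpace ℝ (Fin d),
      (∫⁻ y, q 0 u x' y) ≤ ENNReal.ofReal C₀ := by
    intro u hu x'
    have h1 : (∫⁻ y, q 0 u x' y) = ∫⁻ y, ENNReal.ofReal (p u x' y) :=
      lintegral_congr fun y => by rw [hq0]
    rw [h1]
    calc ∫⁻ y, ENNReal.ofReal (p u x' y)
        ≤ ∫⁻ y, ENNReal.ofReal C *
            ENNReal.ofReal (Gam d lam u (x' - y) + eta d α u (x' - y)) :=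
          lintegral_mono fun y => by
            rw [← ENNReal.ofReal_mul hC0']
            exact ENNReal.ofReal_le_ofReal (hpb u hu x' y)
      _ = ENNReal.ofReal C * ∫⁻ y,
            ENNReal.ofReal (Gam d lam u (x' - y) + eta d α u (x' - y)) :=
          lintegral_const_mul' _ _ ENNReal.ofReal_ne_top
      _ ≤ ENNReal.ofReal C * Kc d α lam :=
          mul_le_mul_right (base_bound d hα1 hα2 hlam hu.1 hu.2 x') _
      _ ≤ ENNReal.ofReal C₀ := by
          rw [← ENNReal.ofReal_toReal (Kc_lt_top d hα1 hlam).ne,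
            ← ENNReal.ofReal_mul hC0']
          exact ENNReal.ofReal_le_ofReal (le_max_right _ _)
  cases k with
  | zero => simpa using base t ht x
  | succ n =>
    by_cases htop : Nmu d α lam μ t = ⊤
    · have hMne : (ENNReal.ofReal M) ≠ 0 := (ENNReal.ofReal_pos.mpr (by linarith)).ne'
      have h2 : (ENNReal.ofReal M * (Nmu d α lam μ t + NF d α lam G t)) ^ (n+1) = ⊤ := by
        rw [htop, top_add, ENNReal.mul_top hMne]
        exact ENNReal.top_pow n.succ_ne_zero
      rw [h2, ENNReal.mul_top (ENNReal.ofReal_pos.mpr (by linarith : (0:ℝ) < C₀)).ne']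
      exact le_top
    · -- μ is σ-finite in this case
      have hle0 : (∫⁻ s in Set.Ioc (0:ℝ) t, ∫⁻ y, ENNReal.ofReal
          (Gam d lam s ((0 : EuclideanSpace ℝ (Fin d)) - y) +
            eta d α s ((0 : EuclideanSpace ℝ (Fin d)) - y)) ∂μ) ≤ Nmu d α lam μ t :=
        le_iSup (fun x' : EuclideanSpace ℝ (Fin d) =>
          ∫⁻ s in Set.Ioc (0 : ℝ) t, ∫⁻ y,
            ENNReal.ofReal (Gam d lam s (x' - y) + eta d α s (x' - y)) ∂μ) 0
      have hfin0 : (∫⁻ s in Set.Ioc (0:ℝ) t, ∫⁻ y, ENNReal.ofReal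
          (Gam d lam s ((0 : EuclideanSpace ℝ (Fin d)) - y) +
            eta d α s ((0 : EuclideanSpace ℝ (Fin d)) - y)) ∂μ) ≠ ⊤ :=
        ne_top_of_le_ne_top htop hle0
      have hex : ∃ s₀ ∈ Set.Ioc (0:ℝ) t, (∫⁻ y, ENNReal.ofReal
          (Gam d lam s₀ ((0 : EuclideanSpace ℝ (Fin d)) - y) +
            eta d α s₀ ((0 : EuclideanSpace ℝ (Fin d)) - y)) ∂μ) ≠ ⊤ := by
        by_contra hcon
        push_neg at hcon
        apply hfin0
        rw [eq_top_iff]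
        have hvol : (volume (Set.Ioc (0:ℝ) t)) ≠ 0 := by
          rw [Real.volume_Ioc]
          simp only [ne_eq, ENNReal.ofReal_eq_zero, not_le]
          linarith [ht.1]
        calc (⊤:ℝ≥0∞) = ⊤ * volume (Set.Ioc (0:ℝ) t) := (ENNReal.top_mul hvol).symm
          _ = ∫⁻ _ in Set.Ioc (0:ℝ) t, (⊤:ℝ≥0∞) := (setLIntegral_const _ _).symm
          _ ≤ _ := lintegral_mono_ae ((ae_restrict_iff' measurableSet_Ioc).mpr
              (ae_of_all _ fun s hs => (hcon s hs).ge))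
      obtain ⟨s₀, hs₀, hs₀fin⟩ := hex
      haveI hσ : SigmaFinite μ := sigmaFinite_of_pos_lintegral μ _
        (meas_ge_ofReal d α lam s₀ 0)
        (fun y => ENNReal.ofReal_pos.mpr
          (add_pos_of_pos_of_nonneg (gam_pos d hs₀.1 _) (eta_nonneg d _ hs₀.1.le)))
        hs₀fin
      -- joint measurability of the iterates
      have hmq : ∀ m, Measurable fun r :
          ℝ × EuclideanSpace ℝ (Fin d) × EuclideanSpace ℝ (Fin d) =>
          q m r.1 r.2.1 r.2.2 := by
        intro m
        induction m with
        | zero =>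
          have heq0 : (fun r : ℝ × EuclideanSpace ℝ (Fin d) × EuclideanSpace ℝ (Fin d) =>
              q 0 r.1 r.2.1 r.2.2) = fun r => ENNReal.ofReal (p r.1 r.2.1 r.2.2) :=
            funext fun r => hq0 r.1 r.2.1 r.2.2
          rw [heq0]
          exact ENNReal.measurable_ofReal.comp hp
        | succ m ihm =>
          exact meas_q_step α p hp μ G hG c hc (q m) (q (m+1)) ihm (hqrec m)
      -- the main induction
      have key : ∀ m : ℕ, ∀ u : ℝ, 0 < u → u ≤ 1 → ∀ x' : EuclideanSpace ℝ (Fin d),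
          (∫⁻ y, q m u x' y) ≤ ENNReal.ofReal C₀ *
            (ENNReal.ofReal M * (Nmu d α lam μ u + NF d α lam G u)) ^ m := by
        intro m
        induction m with
        | zero =>
          intro u hu hu1 x'
          simpa using base u ⟨hu, hu1⟩ x'
        | succ m ihm =>
          intro u hu hu1 x'
          set A : ℝ≥0∞ := ENNReal.ofReal M * (Nmu d α lam μ u + NF d α lam G u) with hA
          have hIH : ∀ s ∈ Set.Ioc (0:ℝ) u, ∀ z, (∫⁻ y, q m s z y) ≤
              ENNReal.ofReal C₀ * A ^ m := by
            intro s hs z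
            refine le_trans (ihm s hs.1 (le_trans hs.2 hu1) z) ?_
            rw [hA]
            gcongr
            · exact Nmu_mono d α lam μ hs.2
            · exact NF_mono d α lam G hs.2
          have hstep := step_bound hα1 hα2 hlam hC0' hΛ.le p hp hp0 hpb μ G hG hG0 c hc hcI
            (q m) (q (m+1)) (hmq m) (hqrec m) hu hu1 (ENNReal.ofReal C₀ * A ^ m) hIH x'
          refine le_trans hstep ?_
          have hsum : ENNReal.ofReal C * Nmu d α lam μ u +
              ENNReal.ofReal (C * Λ) * NF d α lam G u ≤ A := by
            rw [hA, mul_add]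
            exact add_le_add
              (mul_le_mul_left (ENNReal.ofReal_le_ofReal hCM) _)
              (mul_le_mul_left (ENNReal.ofReal_le_ofReal hCΛM) _)
          calc ENNReal.ofReal C₀ * A ^ m * (ENNReal.ofReal C * Nmu d α lam μ u +
              ENNReal.ofReal (C * Λ) * NF d α lam G u)
              ≤ ENNReal.ofReal C₀ * A ^ m * A := mul_le_mul_right hsum _
            _ = ENNReal.ofReal C₀ * A ^ (m + 1) := by rw [pow_succ, mul_assoc]
      exact key (n+1) t ht.1 ht.2 x
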